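/- Let R be a complete DVR of mixed characteristic (0,p) with infinite residue field k. Then the additive group Γ = (k, +) is not Tannakian over R: there exists a representation of Γ on a finite-dimensional k-vector space (viewed as an R-module killed by π) admitting no equivariant surjection from a representation of Γ on a finitely generated free R-module. -/

import Mathlib

/-!
The shear representation `c ↦ [[1, c], [0, 1]]` of `Γ = (k, +)` on `k²`, an `R`-module killed
by `π`, is faithful, so every equivariant surjection onto it from a finite free `R`-module `W`
forces `Γ` to act faithfully on `W`. Then `Γ` embeds into `GL_n(K)`, `K = Frac R`, as a commuting
family of matrices with `γ ^ p = 1`. Such a family is finite: it lies in a commutative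
finite-dimensional `K`-algebra `A` in which `p` is a unit, and since `X ^ p - 1` is separable,
its roots in `A` are determined by their images in the finitely many residue fields of `A`,
each of which contains at most `p` of them. This contradicts `k` being infinite.
-/

/-- A weak lift of a representation `ρ` of the abstract group `Γ` on the `R`-module `V`. -/
structure WeakLift (R Γ : Type) [CommRing R] [Group Γ] (V : Type) [AddCommGroup V]
    [Module R V] (ρ : Representation R Γ V) where
  W : Type
  [instAddCommGroup : AddCommGroup W]
  [instModule : Module R W]
  finite : Module.Finite R W
  free : Module.Free R W
  σ : Representation R Γ W
  f : W →ₗ[R] V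
  surjective : Function.Surjective f
  equivariant : ∀ γ : Γ, f ∘ₗ σ γ = ρ γ ∘ₗ f

/-- A representation of `Γ` on a finitely generated `R`-module killed by `π`
admitting no weak lift. -/
structure NonLiftableRep (R Γ : Type) [CommRing R] [Group Γ] (π : R) where
  V : Type
  [instAddCommGroup : AddCommGroup V]
  [instModule : Module R V]
  finite : Module.Finite R V
  killed : ∀ v : V, π • v = 0
  ρ : Representation R Γ V
  noWeakLift : ¬ Nonempty (WeakLift R Γ V ρ)

open Polynomial

theorem eq_of_pow_eq_one_of_isNilpotent_sub {A : Type*} [CommRing A] {p : ℕ}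
    (hp : IsUnit (p : A)) {a b : A} (ha : a ^ p = 1) (hb : b ^ p = 1)
    (hab : IsNilpotent (a - b)) : a = b := by
  rcases eq_or_ne p 0 with rfl | hp0
  · have := subsingleton_of_zero_eq_one (isUnit_zero_iff.mp (by simpa using hp))
    exact Subsingleton.elim a b
  have root : ∀ x : A, x ^ p = 1 → aeval x (X ^ p - 1 : A[X]) = 0 := fun x hx => by simp [hx]
  have hunit : IsUnit (aeval a (derivative (X ^ p - 1 : A[X]))) := by
    rw [derivative_sub, derivative_X_pow, derivative_one, sub_zero, map_mul, aeval_C, map_pow,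
      aeval_X]
    exact hp.mul ((IsUnit.of_pow_eq_one ha hp0).pow (p - 1))
  exact (existsUnique_nilpotent_sub_and_aeval_eq_zero (by simp [root a ha]) hunit).unique
    ⟨by simp, root a ha⟩ ⟨hab, root b hb⟩

theorem finite_setOf_pow_eq_one_of_isDomain {A : Type*} [CommRing A] [IsDomain A] {p : ℕ}
    (hp : p ≠ 0) : {a : A | a ^ p = 1}.Finite := by
  refine (finite_setOfPred_isRoot (X_pow_sub_C_ne_zero (Nat.pos_of_ne_zero hp) (1 : A))).subset
    fun a ha => ?_
  simpa [sub_eq_zero] using ha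

theorem finite_setOf_pow_eq_one_of_isArtinianRing {A : Type*} [CommRing A] [IsArtinianRing A]
    {p : ℕ} (hp : IsUnit (p : A)) : {a : A | a ^ p = 1}.Finite := by
  rcases eq_or_ne p 0 with rfl | hp0
  · have := subsingleton_of_zero_eq_one (isUnit_zero_iff.mp (by simpa using hp))
    exact Set.toFinite _
  let residues : A →+* ∀ I : MaximalSpectrum A, A ⧸ I.asIdeal :=
    RingHom.pi fun I => Ideal.Quotient.mk I.asIdeal
  have hfin : {x : ∀ I : MaximalSpectrum A, A ⧸ I.asIdeal | x ^ p = 1}.Finite := by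
    refine (Set.Finite.pi (t := fun I : MaximalSpectrum A => {y : A ⧸ I.asIdeal | y ^ p = 1})
      fun I => ?_).subset fun x hx I _ => congrFun hx I
    have := I.isMaximal.isPrime
    exact finite_setOf_pow_eq_one_of_isDomain hp0
  refine Set.Finite.of_finite_image (f := residues) (hfin.subset ?_) fun a ha b hb hab => ?_
  · rintro _ ⟨a, ha, rfl⟩
    simp [← map_pow, ha.out]
  · refine eq_of_pow_eq_one_of_isNilpotent_sub hp ha hb ?_
    rw [← mem_nilradical, IsArtinianRing.nilradical_eq_iInf, Submodule.mem_iInf]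
    intro I
    rw [← Ideal.Quotient.eq]
    exact congrFun hab I

open scoped IsMulCommutative in
theorem finite_of_pairwise_commute_of_pow_eq_one {K M : Type*} [Field K] [Ring M] [Algebra K M]
    [FiniteDimensional K M] {p : ℕ} (hp : (p : K) ≠ 0) {S : Set M}
    (hcomm : S.Pairwise Commute) (hS : ∀ s ∈ S, s ^ p = 1) : S.Finite := by
  have : IsMulCommutative (Algebra.adjoin K S) :=
    Algebra.isMulCommutative_adjoin K fun a ha b hb => (hcomm.of_refl ha hb).eq
  have : IsArtinianRing (Algebra.adjoin K S) := IsArtinianRing.of_finite K _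
  have hpA : IsUnit (p : Algebra.adjoin K S) := by
    simpa using (isUnit_iff_ne_zero.mpr hp).map (algebraMap K (Algebra.adjoin K S))
  refine ((finite_setOf_pow_eq_one_of_isArtinianRing hpA).image Subtype.val).subset
    fun s hs => ⟨⟨s, Algebra.subset_adjoin hs⟩, Subtype.ext (by simpa using hS s hs), rfl⟩

theorem finite_of_injective_representation {R Γ W : Type*} [CommRing R] [IsDomain R]
    [CommGroup Γ] [AddCommGroup W] [Module R W] [Module.Finite R W] [Module.Free R W] {p : ℕ}
    (hp : (p : R) ≠ 0) (hΓ : ∀ γ : Γ, γ ^ p = 1) (σ : Representation R Γ W)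
    (hσ : Function.Injective σ) : Finite Γ := by
  let K := FractionRing R
  let b := Module.Free.chooseBasis R W
  let τ : Γ →* Matrix _ _ K := ((algebraMap R K).mapMatrix.toMonoidHom.comp
    (LinearMap.toMatrixAlgEquiv b).toMonoidHom).comp σ
  have hτ : Function.Injective τ :=
    (Matrix.map_injective (IsFractionRing.injective R K)).comp
      ((LinearMap.toMatrixAlgEquiv b).injective.comp hσ)
  have hpK : (p : K) ≠ 0 := by
    simpa using (IsFractionRing.injective R K).ne hp
  have hrange : (Set.range τ).Finite := by
    refine finite_of_pairwise_commute_of_pow_eq_one hpK ?_ ?_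
    · rintro _ ⟨a, rfl⟩ _ ⟨b, rfl⟩ -
      simp only [Commute, SemiconjBy, ← map_mul, mul_comm]
    · rintro _ ⟨γ, rfl⟩
      rw [← map_pow, hΓ, map_one]
  have := hrange.to_subtype
  exact Finite.of_injective _ (Set.rangeFactorization_injective.mpr hτ)

attribute [instance] WeakLift.instAddCommGroup WeakLift.instModule

theorem WeakLift.injective_σ {R Γ V : Type} [CommRing R] [Group Γ] [AddCommGroup V] [Module R V]
    {ρ : Representation R Γ V} (L : WeakLift R Γ V ρ) (hρ : Function.Injective ρ) :
    Function.Injective L.σ := by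
  intro γ₁ γ₂ h
  apply hρ
  ext v
  obtain ⟨w, rfl⟩ := L.surjective v
  calc ρ γ₁ (L.f w) = L.f (L.σ γ₁ w) := (LinearMap.congr_fun (L.equivariant γ₁) w).symm
    _ = L.f (L.σ γ₂ w) := by rw [h]
    _ = ρ γ₂ (L.f w) := LinearMap.congr_fun (L.equivariant γ₂) w

def shearRep (R k : Type*) [CommRing R] [CommRing k] [Algebra R k] :
    Representation R (Multiplicative k) (k × k) where
  toFun c :=
    { toFun v := (v.1 + c.toAdd * v.2, v.2)
      map_add' u v := Prod.ext (by simp only [Prod.fst_add, Prod.snd_add]; ring) rfl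
      map_smul' r v := Prod.ext (by simp [smul_add]) rfl }
  map_one' := LinearMap.ext fun v => Prod.ext (by simp) rfl
  map_mul' c d := LinearMap.ext fun v => Prod.ext (by
    simp only [toAdd_mul, LinearMap.coe_mk, AddHom.coe_mk, Module.End.mul_apply]; ring) rfl

theorem shearRep_injective (R k : Type*) [CommRing R] [CommRing k] [Algebra R k] :
    Function.Injective (shearRep R k) := by
  intro c d h
  simpa [shearRep] using congrArg (fun f => (f (0, 1)).1) h

theorem stmt6_general {R : Type} [CommRing R] [IsDomain R] [IsDiscreteValuationRing R]
    (π : R) (hπ : Irreducible π)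
    [CharZero R] (p : ℕ) (hp : p.Prime) [CharP (IsLocalRing.ResidueField R) p]
    [Infinite (IsLocalRing.ResidueField R)] :
    Nonempty (NonLiftableRep R (Multiplicative (IsLocalRing.ResidueField R)) π) := by
  let k := IsLocalRing.ResidueField R
  have hπk : algebraMap R k π = 0 := (IsLocalRing.residue_eq_zero_iff π).mpr hπ.not_isUnit
  have hkilled (v : k × k) : π • v = 0 := by
    rw [← algebraMap_smul k π v, hπk, zero_smul]
  refine ⟨⟨k × k, inferInstance, hkilled, shearRep R k, fun ⟨L⟩ => ?_⟩⟩
  have := L.finite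
  have := L.free
  have hexp (γ : Multiplicative k) : γ ^ p = 1 := by
    apply Multiplicative.toAdd.injective
    rw [toAdd_pow, toAdd_one, nsmul_eq_mul, CharP.cast_eq_zero, zero_mul]
  have := finite_of_injective_representation (Nat.cast_ne_zero.mpr hp.ne_zero) hexp L.σ
    (L.injective_σ (shearRep_injective R k))
  exact not_finite (Multiplicative k)

/-- Over a complete DVR of mixed characteristic `(0, p)` with infinite residue field `k`,
the additive group `Γ = (k, +)` is not Tannakian: it has a representation on a
finite-dimensional `k`-vector space admitting no equivariant surjection from a
representation on a finitely generated free `R`-module. -/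
theorem stmt6 {R : Type} [CommRing R] [IsDomain R] [IsDiscreteValuationRing R]
    (π : R) (hπ : Irreducible π)
    [IsAdicComplete (IsLocalRing.maximalIdeal R) R]
    [CharZero R] (p : ℕ) (hp : p.Prime) [CharP (IsLocalRing.ResidueField R) p]
    [Infinite (IsLocalRing.ResidueField R)] :
    Nonempty (NonLiftableRep R (Multiplicative (IsLocalRing.ResidueField R)) π) :=
  stmt6_general π hπ p hp
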